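/- Let K, L be star bodies about the origin in ℝ^n and φ ∈ Φ. Then O_φ(K,L) ≥ (V(K)/V(L))^{1/n}, with equality if and only if K and L are dilates. -/

import Mathlib

/-!
Put `g = ρ_K / ρ_L` on the unit sphere and `μ = dV_K^*`, a probability measure by the polar
coordinate formula `V(K) = (1/n) ∫ ρ_K^n dS`. Then `O_φ(K, L)` is the `φ`-Luxemburg mean of `g`
with respect to `μ`, and Jensen's inequality for `φ` gives `∫ g dμ ≤ O_φ(K, L)`. Jensen's
inequality for `y ↦ y⁻ⁿ`, with `∫ g⁻ⁿ dμ = V(L) / V(K)`, gives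
`(V(K) / V(L))^{1/n} ≤ ∫ g dμ`.
Equality forces equality in the second Jensen inequality, so the continuous function `g` is
constant (`μ` charges every nonempty open set), i.e. `K` is a dilate of `L`; conversely, for
`K = c • L` we have `g ≡ c` and both sides equal `c`.
-/

open MeasureTheory Metric Set

noncomputable section

/-- The radial function of a set: `ρ_K x = sup {r ≥ 0 : r • x ∈ K}`. -/
def radialFn {n : ℕ} (K : Set (EuclideanSpace ℝ (Fin n))) (x : EuclideanSpace ℝ (Fin n)) : ℝ :=
  sSup {r : ℝ | 0 ≤ r ∧ r • x ∈ K}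

/-- A star body about the origin: compact, with `0` in its interior, star-shaped
with respect to the origin, and with continuous radial function on the sphere. -/
def IsStarBody {n : ℕ} (K : Set (EuclideanSpace ℝ (Fin n))) : Prop :=
  IsCompact K ∧ (0 : EuclideanSpace ℝ (Fin n)) ∈ interior K ∧
    (∀ x ∈ K, ∀ t : ℝ, t ∈ Icc (0 : ℝ) 1 → t • x ∈ K) ∧
    Continuous fun u : sphere (0 : EuclideanSpace ℝ (Fin n)) 1 => radialFn K u

/-- The spherical Lebesgue measure on the unit sphere `S^{n-1}`. -/
def sphereMeasure (n : ℕ) : Measure (sphere (0 : EuclideanSpace ℝ (Fin n)) 1) :=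
  (volume : Measure (EuclideanSpace ℝ (Fin n))).toSphere


/-- The normalized dual conical measure `dV_K^* = ρ_K^n/(n V(K)) dS`. -/
def normDualConical (n : ℕ) (K : Set (EuclideanSpace ℝ (Fin n))) :
    Measure (sphere (0 : EuclideanSpace ℝ (Fin n)) 1) :=
  (sphereMeasure n).withDensity fun u =>
    ENNReal.ofReal ((radialFn K u) ^ n / (n * (volume K).toReal))

/-- `O_φ(K,L) = inf {t > 0 : ∫ φ (ρ_K/(t ρ_L)) dV_K^* ≤ φ 1}`
(equivalently, `φ⁻¹ (∫ φ (ρ_K/(t ρ_L)) dV_K^*) ≤ 1`). -/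
def Ofun (n : ℕ) (φ : ℝ → ℝ) (K L : Set (EuclideanSpace ℝ (Fin n))) : ℝ :=
  sInf {t : ℝ | 0 < t ∧
    ∫ u, φ (radialFn K u / (t * radialFn L u)) ∂(normDualConical n K) ≤ φ 1}

open scoped Pointwise

section CompactSpace

variable {X : Type*} [TopologicalSpace X] [CompactSpace X] {g : X → ℝ}

theorem Continuous.exists_pos_forall_le (hg : Continuous g) (hpos : ∀ x, 0 < g x) :
    ∃ a > 0, ∀ x, a ≤ g x := by
  cases isEmpty_or_nonempty X
  · exact ⟨1, one_pos, isEmptyElim⟩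
  obtain ⟨x₀, -, hx₀⟩ := isCompact_univ.exists_isMinOn univ_nonempty hg.continuousOn
  exact ⟨g x₀, hpos x₀, fun x => hx₀ (mem_univ x)⟩

variable [MeasurableSpace X] [OpensMeasurableSpace X] {μ : Measure X}

theorem Continuous.integrable_of_compactSpace {E : Type*} [NormedAddCommGroup E]
    [IsFiniteMeasure μ] {f : X → E} (hf : Continuous f) : Integrable f μ :=
  hf.integrable_of_hasCompactSupport (HasCompactSupport.of_compactSpace f)

variable [IsProbabilityMeasure μ]

theorem integral_pos_of_continuous (hg : Continuous g) (hpos : ∀ x, 0 < g x) :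
    0 < ∫ x, g x ∂μ := by
  obtain ⟨a, ha, hga⟩ := hg.exists_pos_forall_le hpos
  calc 0 < a := ha
    _ = ∫ _, a ∂μ := by simp
    _ ≤ ∫ x, g x ∂μ := integral_mono (integrable_const a) hg.integrable_of_compactSpace hga

theorem zpow_integral_le_integral_zpow (m : ℤ) (hg : Continuous g) (hpos : ∀ x, 0 < g x) :
    (∫ x, g x ∂μ) ^ m ≤ ∫ x, g x ^ m ∂μ := by
  obtain ⟨a, ha, hga⟩ := hg.exists_pos_forall_le hpos
  have hcont : ContinuousOn (fun y : ℝ => y ^ m) (Ici a) :=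
    (continuousOn_zpow₀ m).mono fun y hy => (ha.trans_le hy).ne'
  exact ((convexOn_zpow m).subset (Ici_subset_Ioi.2 ha) (convex_Ici a)).map_integral_le hcont
    isClosed_Ici (ae_of_all _ hga) hg.integrable_of_compactSpace
    (hg.zpow₀ m fun x => Or.inl (hpos x).ne').integrable_of_compactSpace

theorem eq_integral_of_zpow_integral_eq [μ.IsOpenPosMeasure] {m : ℤ} (hm₀ : m ≠ 0)
    (hm₁ : m ≠ 1) (hg : Continuous g) (hpos : ∀ x, 0 < g x)
    (h : (∫ x, g x ∂μ) ^ m = ∫ x, g x ^ m ∂μ) (x : X) :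
    g x = ∫ y, g y ∂μ := by
  obtain ⟨a, ha, hga⟩ := hg.exists_pos_forall_le hpos
  have hcont : ContinuousOn (fun y : ℝ => y ^ m) (Ici a) :=
    (continuousOn_zpow₀ m).mono fun y hy => (ha.trans_le hy).ne'
  have hconv := (strictConvexOn_zpow hm₀ hm₁).subset (Ici_subset_Ioi.2 ha) (convex_Ici a)
  rcases hconv.ae_eq_const_or_map_average_lt (μ := μ) hcont isClosed_Ici (ae_of_all _ hga)
      hg.integrable_of_compactSpace
      (hg.zpow₀ m fun x => Or.inl (hpos x).ne').integrable_of_compactSpace with hconst | hlt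
  · rw [average_eq_integral] at hconst
    exact congrFun ((hg.ae_eq_iff_eq μ continuous_const).1 hconst) x
  · rw [average_eq_integral, average_eq_integral] at hlt
    exact absurd h hlt.ne

end CompactSpace

section OrliczMean

variable {X : Type*} [MeasurableSpace X] (μ : Measure X) (φ : ℝ → ℝ)

def orliczMean (g : X → ℝ) : ℝ :=
  sInf {t : ℝ | 0 < t ∧ ∫ x, φ (g x / t) ∂μ ≤ φ 1}

variable {μ φ} [IsProbabilityMeasure μ]

theorem orliczMean_const (hφ : StrictMonoOn φ (Ici 0)) {c : ℝ} (hc : 0 < c) :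
    orliczMean μ φ (fun _ => c) = c := by
  have hS : {t : ℝ | 0 < t ∧ ∫ _, φ (c / t) ∂μ ≤ φ 1} = Ici c := by
    ext t
    simp only [integral_const, probReal_univ, one_smul, mem_ofPred_eq, mem_Ici]
    refine ⟨fun ⟨ht, h⟩ => ?_, fun h => ?_⟩
    · rwa [hφ.le_iff_le (div_nonneg hc.le ht.le) (mem_Ici.2 zero_le_one), div_le_one ht] at h
    · have ht := hc.trans_le h
      exact ⟨ht, hφ.monotoneOn (div_nonneg hc.le ht.le) (mem_Ici.2 zero_le_one)
        ((div_le_one ht).2 h)⟩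
  rw [orliczMean, hS, csInf_Ici]

theorem integral_le_orliczMean [TopologicalSpace X] [CompactSpace X] [OpensMeasurableSpace X]
    (hφconv : ConvexOn ℝ (Ici 0) φ) (hφmono : StrictMonoOn φ (Ici 0)) {g : X → ℝ}
    (hg : Continuous g) (hpos : ∀ x, 0 < g x) :
    ∫ x, g x ∂μ ≤ orliczMean μ φ g := by
  obtain ⟨a, ha, hga⟩ := hg.exists_pos_forall_le hpos
  obtain ⟨b, hgb⟩ := (isCompact_range hg).bddAbove
  have hφcont : ContinuousOn φ (Ioi 0) :=
    (hφconv.subset Ioi_subset_Ici_self (convex_Ioi 0)).continuousOn isOpen_Ioi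
  have hint : ∀ t > 0, Integrable (fun x => φ (g x / t)) μ := fun t ht =>
    (hφcont.comp_continuous (hg.div_const t) fun x =>
      div_pos (hpos x) ht).integrable_of_compactSpace
  have hb : 0 < max b 1 := lt_max_of_lt_right one_pos
  refine le_csInf ⟨max b 1, hb, ?_⟩ fun t ⟨ht, hφt⟩ => ?_
  · calc ∫ x, φ (g x / max b 1) ∂μ ≤ ∫ _, φ 1 ∂μ := by
          refine integral_mono (hint _ hb) (integrable_const _) fun x => ?_
          refine hφmono.monotoneOn (div_pos (hpos x) hb).le (mem_Ici.2 zero_le_one) ?_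
          exact (div_le_one hb).2 ((hgb (mem_range_self x)).trans (le_max_left b 1))
      _ = φ 1 := by simp
  have hJensen : φ ((∫ x, g x ∂μ) / t) ≤ ∫ x, φ (g x / t) ∂μ := by
    rw [← integral_div]
    have hconv := hφconv.subset (Ici_subset_Ici.2 (by positivity)) (convex_Ici (a / t))
    refine hconv.map_integral_le
      (hφcont.mono fun y hy => (div_pos ha ht).trans_le hy) isClosed_Ici
      (ae_of_all _ fun x => div_le_div_of_nonneg_right (hga x) ht.le)
      (hg.integrable_of_compactSpace.div_const t) (hint t ht)
  rw [← div_le_one ht, ← hφmono.le_iff_le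
    (div_nonneg (integral_pos_of_continuous hg hpos).le ht.le) (mem_Ici.2 zero_le_one)]
  exact hJensen.trans hφt

end OrliczMean

theorem MeasureTheory.Measure.volumeIoiPow_Iic (m : ℕ) (x : Ioi (0 : ℝ)) :
    volumeIoiPow m (Iic x) = ENNReal.ofReal (x.1 ^ (m + 1) / (m + 1)) := by
  have hx : volumeIoiPow m {x} = 0 := withDensity_absolutelyContinuous _ _ <| by
    rw [comap_subtype_coe_apply measurableSet_Ioi]
    simp
  rw [← measure_congr (Iio_ae_eq_Iic' hx), volumeIoiPow_apply_Iio]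

instance (n : ℕ) : IsFiniteMeasure (sphereMeasure n) := by
  unfold sphereMeasure; infer_instance

instance (n : ℕ) : (sphereMeasure n).IsOpenPosMeasure := by
  unfold sphereMeasure; infer_instance

namespace IsStarBody

variable {n : ℕ} {K L : Set (EuclideanSpace ℝ (Fin n))} {u : EuclideanSpace ℝ (Fin n)}

theorem zero_mem (hK : IsStarBody K) : (0 : EuclideanSpace ℝ (Fin n)) ∈ K :=
  interior_subset hK.2.1

theorem continuous_radialFn (hK : IsStarBody K) :
    Continuous fun u : sphere (0 : EuclideanSpace ℝ (Fin n)) 1 => radialFn K u :=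
  hK.2.2.2

theorem continuous_radialFn_pow_div (hK : IsStarBody K) (c : ℝ) :
    Continuous fun u : sphere (0 : EuclideanSpace ℝ (Fin n)) 1 => radialFn K u ^ n / c :=
  (hK.continuous_radialFn.pow n).div_const c

theorem bddAbove_radialSet (hK : IsStarBody K) (hu : ‖u‖ = 1) :
    BddAbove {r : ℝ | 0 ≤ r ∧ r • u ∈ K} := by
  obtain ⟨R, hR⟩ := hK.1.isBounded.subset_closedBall 0
  refine ⟨R, fun r ⟨hr, hru⟩ => ?_⟩
  simpa [norm_smul, hu, abs_of_nonneg hr] using mem_closedBall_zero_iff.1 (hR hru)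

theorem radialFn_smul_mem (hK : IsStarBody K) (hu : ‖u‖ = 1) : radialFn K u • u ∈ K := by
  have hclosed : IsClosed {r : ℝ | 0 ≤ r ∧ r • u ∈ K} :=
    isClosed_Ici.inter (hK.1.isClosed.preimage (continuous_id.smul continuous_const))
  exact (hclosed.csSup_mem ⟨0, le_rfl, by simpa using hK.zero_mem⟩ (hK.bddAbove_radialSet hu)).2

theorem radialFn_pos (hK : IsStarBody K) (hu : ‖u‖ = 1) : 0 < radialFn K u := by
  obtain ⟨ε, hε, hball⟩ := Metric.mem_nhds_iff.1 (mem_interior_iff_mem_nhds.1 hK.2.1)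
  have hmem : (ε / 2) • u ∈ K := hball (by simp [norm_smul, hu, abs_of_pos hε, hε])
  exact (half_pos hε).trans_le (le_csSup (hK.bddAbove_radialSet hu) ⟨(half_pos hε).le, hmem⟩)

theorem radialFn_pos_of_mem_sphere (hK : IsStarBody K)
    (u : sphere (0 : EuclideanSpace ℝ (Fin n)) 1) : 0 < radialFn K u :=
  hK.radialFn_pos (mem_sphere_zero_iff_norm.1 u.2)

theorem smul_mem_iff_le_radialFn (hK : IsStarBody K) (hu : ‖u‖ = 1) {r : ℝ} (hr : 0 ≤ r) :
    r • u ∈ K ↔ r ≤ radialFn K u := by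
  refine ⟨fun h => le_csSup (hK.bddAbove_radialSet hu) ⟨hr, h⟩, fun h => ?_⟩
  have hρ := hK.radialFn_pos hu
  have hru : r • u = (r / radialFn K u) • (radialFn K u • u) := by
    rw [smul_smul, div_mul_cancel₀ _ hρ.ne']
  rw [hru]
  exact hK.2.2.1 _ (hK.radialFn_smul_mem hu) _ ⟨by positivity, (div_le_one hρ).2 h⟩

theorem mem_iff_norm_le_radialFn (hK : IsStarBody K) {x : EuclideanSpace ℝ (Fin n)}
    (hx : x ≠ 0) :
    x ∈ K ↔ ‖x‖ ≤ radialFn K (‖x‖⁻¹ • x) := by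
  have hx' : ‖x‖ ≠ 0 := norm_ne_zero_iff.2 hx
  have hu : ‖‖x‖⁻¹ • x‖ = 1 := by
    rw [norm_smul, norm_inv, norm_norm, inv_mul_cancel₀ hx']
  rw [← hK.smul_mem_iff_le_radialFn hu (norm_nonneg x), smul_inv_smul₀ hx']

theorem radialFn_smul (hL : IsStarBody L) {c : ℝ} (hc : 0 < c) (hu : ‖u‖ = 1) :
    radialFn (c • L) u = c * radialFn L u := by
  have hset : {r : ℝ | 0 ≤ r ∧ r • u ∈ c • L} = Icc 0 (c * radialFn L u) := by
    ext r
    refine and_congr_right fun hr => ?_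
    rw [mem_smul_set_iff_inv_smul_mem₀ hc.ne', smul_smul,
      hL.smul_mem_iff_le_radialFn hu (by positivity), inv_mul_le_iff₀ hc]
  rw [radialFn, hset, csSup_Icc (mul_pos hc (hL.radialFn_pos hu)).le]

theorem eq_smul_of_radialFn_eq (hK : IsStarBody K) (hL : IsStarBody L) {c : ℝ} (hc : 0 < c)
    (h : ∀ u : EuclideanSpace ℝ (Fin n), ‖u‖ = 1 → radialFn K u = c * radialFn L u) :
    K = c • L := by
  ext x
  rcases eq_or_ne x 0 with rfl | hx
  · exact iff_of_true hK.zero_mem ⟨0, hL.zero_mem, smul_zero c⟩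
  have hu : ‖‖x‖⁻¹ • x‖ = 1 := by
    rw [norm_smul, norm_inv, norm_norm, inv_mul_cancel₀ (norm_ne_zero_iff.2 hx)]
  rw [mem_smul_set_iff_inv_smul_mem₀ hc.ne', hK.mem_iff_norm_le_radialFn hx,
    hL.mem_iff_norm_le_radialFn (smul_ne_zero (inv_ne_zero hc.ne') hx), h _ hu]
  have hdir : ‖c⁻¹ • x‖⁻¹ • c⁻¹ • x = ‖x‖⁻¹ • x := by
    rw [norm_smul, Real.norm_of_nonneg (inv_nonneg.2 hc.le), smul_smul, mul_inv, inv_inv]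
    congr 1
    field_simp
  rw [hdir, norm_smul, Real.norm_of_nonneg (inv_nonneg.2 hc.le), inv_mul_le_iff₀ hc]

theorem volume_toReal_pos (hK : IsStarBody K) : 0 < (volume K).toReal :=
  ENNReal.toReal_pos ((isOpen_interior.measure_pos volume ⟨0, hK.2.1⟩).trans_le
    (measure_mono interior_subset)).ne' hK.1.measure_lt_top.ne

theorem volume_smul_div_rpow (hn : 0 < n) (hL : IsStarBody L) {c : ℝ} (hc : 0 < c) :
    ((volume (c • L)).toReal / (volume L).toReal) ^ ((1 : ℝ) / n) = c := by
  rw [Measure.addHaar_smul_of_nonneg volume hc.le, finrank_euclideanSpace_fin, ENNReal.toReal_mul,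
    ENNReal.toReal_ofReal (by positivity), mul_div_cancel_right₀ _ hL.volume_toReal_pos.ne',
    one_div, Real.pow_rpow_inv_natCast hc.le hn.ne']

theorem lintegral_radialFn_pow (hn : 0 < n) (hK : IsStarBody K) :
    ∫⁻ u, ENNReal.ofReal (radialFn K u ^ n / n) ∂sphereMeasure n = volume K := by
  have : Nontrivial (EuclideanSpace ℝ (Fin n)) :=
    Module.nontrivial_of_finrank_pos (R := ℝ) (by rwa [finrank_euclideanSpace_fin])
  set s : Set (sphere (0 : EuclideanSpace ℝ (Fin n)) 1 × Ioi (0 : ℝ)) :=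
    {p | (p.2 : ℝ) ≤ radialFn K p.1}
  have hs : MeasurableSet s :=
    (isClosed_le (continuous_subtype_val.comp continuous_snd)
      (hK.continuous_radialFn.comp continuous_fst)).measurableSet
  have hpre : homeomorphUnitSphereProd _ ⁻¹' s = Subtype.val ⁻¹' K := by
    ext x
    simp only [s, mem_preimage, mem_ofPred_eq, homeomorphUnitSphereProd_apply_fst_coe,
      homeomorphUnitSphereProd_apply_snd_coe]
    exact (hK.mem_iff_norm_le_radialFn x.2).symm
  calc ∫⁻ u, ENNReal.ofReal (radialFn K u ^ n / n) ∂sphereMeasure n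
      = volume.toSphere.prod
          (Measure.volumeIoiPow (Module.finrank ℝ (EuclideanSpace ℝ (Fin n)) - 1)) s := by
        rw [finrank_euclideanSpace_fin, Measure.prod_apply hs]
        refine lintegral_congr fun u => ?_
        have hρ := hK.radialFn_pos_of_mem_sphere u
        change _ = Measure.volumeIoiPow (n - 1) (Iic ⟨_, hρ⟩)
        rw [Measure.volumeIoiPow_Iic, Nat.sub_add_cancel hn,
          Nat.cast_pred hn, sub_add_cancel]
    _ = volume.comap Subtype.val (Subtype.val ⁻¹' K) := by
        rw [← hpre]
        exact ((Measure.measurePreserving_homeomorphUnitSphereProd volume).measure_preimage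
          hs.nullMeasurableSet).symm
    _ = volume K := by
        rw [comap_subtype_coe_apply (measurableSet_singleton _).compl, Subtype.image_preimage_coe,
          inter_comm, measure_inter_conull (by simp)]

theorem integral_radialFn_pow (hn : 0 < n) (hK : IsStarBody K) :
    ∫ u, radialFn K u ^ n ∂sphereMeasure n = n * (volume K).toReal := by
  have hnonneg : ∀ u : sphere (0 : EuclideanSpace ℝ (Fin n)) 1, 0 ≤ radialFn K u ^ n / n :=
    fun u => by have := hK.radialFn_pos_of_mem_sphere u; positivity
  have hint : Integrable (fun u : sphere (0 : EuclideanSpace ℝ (Fin n)) 1 => radialFn K u ^ n / n)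
      (sphereMeasure n) := (hK.continuous_radialFn_pow_div _).integrable_of_compactSpace
  have hn' : (n : ℝ) ≠ 0 := Nat.cast_ne_zero.2 hn.ne'
  calc ∫ u, radialFn K u ^ n ∂sphereMeasure n
      = n * ∫ u, radialFn K u ^ n / n ∂sphereMeasure n := by
        rw [integral_div, mul_div_cancel₀ _ hn']
    _ = n * (volume K).toReal := by
        rw [integral_eq_lintegral_of_nonneg_ae (ae_of_all _ hnonneg) hint.aestronglyMeasurable,
          hK.lintegral_radialFn_pow hn]

theorem integral_normDualConical (hK : IsStarBody K)
    (f : sphere (0 : EuclideanSpace ℝ (Fin n)) 1 → ℝ) :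
    ∫ u, f u ∂normDualConical n K =
      ∫ u, radialFn K u ^ n / (n * (volume K).toReal) * f u ∂sphereMeasure n := by
  rw [normDualConical, integral_withDensity_eq_integral_toReal_smul
    (hK.continuous_radialFn_pow_div _).measurable.ennreal_ofReal
    (ae_of_all _ fun _ => ENNReal.ofReal_lt_top)]
  refine integral_congr_ae (ae_of_all _ fun u => ?_)
  have := hK.radialFn_pos_of_mem_sphere u
  dsimp only
  rw [ENNReal.toReal_ofReal (by positivity), smul_eq_mul]

theorem isProbabilityMeasure_normDualConical (hn : 0 < n) (hK : IsStarBody K) :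
    IsProbabilityMeasure (normDualConical n K) := by
  have hV := hK.volume_toReal_pos
  have hn' : (0 : ℝ) < n := Nat.cast_pos.2 hn
  constructor
  rw [normDualConical, withDensity_apply _ .univ, Measure.restrict_univ,
    ← ofReal_integral_eq_lintegral_ofReal
      (hK.continuous_radialFn_pow_div _).integrable_of_compactSpace
      (ae_of_all _ fun u => by have := hK.radialFn_pos_of_mem_sphere u; positivity),
    integral_div, hK.integral_radialFn_pow hn, div_self (by positivity), ENNReal.ofReal_one]

theorem isOpenPosMeasure_normDualConical (hn : 0 < n) (hK : IsStarBody K) :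
    (normDualConical n K).IsOpenPosMeasure := by
  have hV := hK.volume_toReal_pos
  have hn' : (0 : ℝ) < n := Nat.cast_pos.2 hn
  refine (withDensity_absolutelyContinuous'
    (hK.continuous_radialFn_pow_div _).measurable.ennreal_ofReal.aemeasurable
    (ae_of_all _ fun u => ?_)).isOpenPosMeasure
  have := hK.radialFn_pos_of_mem_sphere u
  exact (ENNReal.ofReal_pos.2 (by positivity)).ne'

theorem integral_radialFn_div_zpow (hn : 0 < n) (hK : IsStarBody K) (hL : IsStarBody L) :
    ∫ u, (radialFn K u / radialFn L u) ^ (-(n : ℤ)) ∂normDualConical n K =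
      (volume L).toReal / (volume K).toReal := by
  have hV := hK.volume_toReal_pos
  have hn' : (0 : ℝ) < n := Nat.cast_pos.2 hn
  have hpt : ∀ u : sphere (0 : EuclideanSpace ℝ (Fin n)) 1,
      radialFn K u ^ n / (n * (volume K).toReal) * (radialFn K u / radialFn L u) ^ (-(n : ℤ)) =
        radialFn L u ^ n / (n * (volume K).toReal) := fun u => by
    have := (hK.radialFn_pos_of_mem_sphere u).ne'
    rw [zpow_neg, zpow_natCast, div_pow, inv_div]
    field_simp
  rw [hK.integral_normDualConical, integral_congr_ae (ae_of_all _ hpt), integral_div,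
    hL.integral_radialFn_pow hn]
  field_simp

theorem continuous_radialFn_div (hK : IsStarBody K) (hL : IsStarBody L) :
    Continuous fun u : sphere (0 : EuclideanSpace ℝ (Fin n)) 1 => radialFn K u / radialFn L u :=
  hK.continuous_radialFn.div hL.continuous_radialFn fun u =>
    (hL.radialFn_pos_of_mem_sphere u).ne'

theorem radialFn_div_pos (hK : IsStarBody K) (hL : IsStarBody L)
    (u : sphere (0 : EuclideanSpace ℝ (Fin n)) 1) : 0 < radialFn K u / radialFn L u :=
  div_pos (hK.radialFn_pos_of_mem_sphere u)
    (hL.radialFn_pos_of_mem_sphere u)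

theorem volume_div_rpow_le_integral (hn : 0 < n) (hK : IsStarBody K) (hL : IsStarBody L) :
    ((volume K).toReal / (volume L).toReal) ^ ((1 : ℝ) / n) ≤
      ∫ u, radialFn K u / radialFn L u ∂normDualConical n K := by
  have := hK.isProbabilityMeasure_normDualConical hn
  have hm := integral_pos_of_continuous (μ := normDualConical n K) (hK.continuous_radialFn_div hL)
    (hK.radialFn_div_pos hL)
  have hJensen := zpow_integral_le_integral_zpow (μ := normDualConical n K) (-(n : ℤ))
    (hK.continuous_radialFn_div hL) (hK.radialFn_div_pos hL)
  rw [hK.integral_radialFn_div_zpow hn hL, zpow_neg, zpow_natCast,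
    inv_le_comm₀ (pow_pos hm n) (div_pos hL.volume_toReal_pos hK.volume_toReal_pos),
    inv_div] at hJensen
  rwa [one_div, Real.rpow_inv_le_iff_of_pos (div_pos hK.volume_toReal_pos hL.volume_toReal_pos).le
    hm.le (Nat.cast_pos.2 hn), Real.rpow_natCast]

theorem eq_smul_of_integral_eq (hn : 0 < n) (hK : IsStarBody K) (hL : IsStarBody L)
    (h : ∫ u, radialFn K u / radialFn L u ∂normDualConical n K =
      ((volume K).toReal / (volume L).toReal) ^ ((1 : ℝ) / n)) :
    K = (∫ u, radialFn K u / radialFn L u ∂normDualConical n K) • L := by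
  have := hK.isProbabilityMeasure_normDualConical hn
  have := hK.isOpenPosMeasure_normDualConical hn
  have hV := div_pos hK.volume_toReal_pos hL.volume_toReal_pos
  have hJensen : (∫ u, radialFn K u / radialFn L u ∂normDualConical n K) ^ (-(n : ℤ)) =
      ∫ u, (radialFn K u / radialFn L u) ^ (-(n : ℤ)) ∂normDualConical n K := by
    rw [hK.integral_radialFn_div_zpow hn hL, h, zpow_neg, zpow_natCast, one_div,
      Real.rpow_inv_natCast_pow hV.le hn.ne', inv_div]
  have hconst := eq_integral_of_zpow_integral_eq (neg_ne_zero.2 (Nat.cast_ne_zero.2 hn.ne'))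
    (by omega) (hK.continuous_radialFn_div hL) (hK.radialFn_div_pos hL) hJensen
  refine hK.eq_smul_of_radialFn_eq hL (integral_pos_of_continuous (hK.continuous_radialFn_div hL)
    (hK.radialFn_div_pos hL)) fun u hu => ?_
  rw [← hconst ⟨u, mem_sphere_zero_iff_norm.2 hu⟩,
    div_mul_cancel₀ _ (hL.radialFn_pos hu).ne']

end IsStarBody

theorem Ofun_ge_general
    (n : ℕ) (hn : 0 < n) (K L : Set (EuclideanSpace ℝ (Fin n)))
    (hK : IsStarBody K) (hL : IsStarBody L) (φ : ℝ → ℝ)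
    (hφconv : ConvexOn ℝ (Ici (0 : ℝ)) φ)
    (hφmono : StrictMonoOn φ (Ici (0 : ℝ))) :
    ((volume K).toReal / (volume L).toReal) ^ ((1 : ℝ) / n) ≤ Ofun n φ K L ∧
      (Ofun n φ K L = ((volume K).toReal / (volume L).toReal) ^ ((1 : ℝ) / n) ↔
        ∃ c : ℝ, 0 < c ∧ K = c • L) := by
  have := hK.isProbabilityMeasure_normDualConical hn
  have hOfun : Ofun n φ K L =
      orliczMean (normDualConical n K) φ fun u => radialFn K u / radialFn L u := by
    simp only [Ofun, orliczMean, div_mul_eq_div_div_swap]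
  have hmean : ∫ u, radialFn K u / radialFn L u ∂normDualConical n K ≤ Ofun n φ K L :=
    hOfun ▸ integral_le_orliczMean hφconv hφmono (hK.continuous_radialFn_div hL)
      (hK.radialFn_div_pos hL)
  have hdual := hK.volume_div_rpow_le_integral hn hL
  refine ⟨hdual.trans hmean, fun heq => ⟨_, integral_pos_of_continuous
    (hK.continuous_radialFn_div hL) (hK.radialFn_div_pos hL),
    hK.eq_smul_of_integral_eq hn hL (le_antisymm (heq ▸ hmean) hdual)⟩, ?_⟩
  rintro ⟨c, hc, rfl⟩
  have hratio : (fun u : sphere (0 : EuclideanSpace ℝ (Fin n)) 1 =>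
      radialFn (c • L) u / radialFn L u) = fun _ => c := funext fun u => by
    have hu := mem_sphere_zero_iff_norm.1 u.2
    rw [hL.radialFn_smul hc hu, mul_div_cancel_right₀ _ (hL.radialFn_pos hu).ne']
  rw [hOfun, hratio, orliczMean_const hφmono hc, hL.volume_smul_div_rpow hn hc]

/-- For star bodies `K, L` about the origin and `φ ∈ Φ`:
`O_φ(K,L) ≥ (V(K)/V(L))^{1/n}`, with equality iff `K` and `L` are dilates. -/
theorem Ofun_ge
    (n : ℕ) (hn : 0 < n) (K L : Set (EuclideanSpace ℝ (Fin n)))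
    (hK : IsStarBody K) (hL : IsStarBody L) (φ : ℝ → ℝ)
    (hφconv : ConvexOn ℝ (Ici (0 : ℝ)) φ)
    (hφmono : StrictMonoOn φ (Ici (0 : ℝ)))
    (hφ0 : φ 0 = 0) :
    ((volume K).toReal / (volume L).toReal) ^ ((1 : ℝ) / n) ≤ Ofun n φ K L ∧
      (Ofun n φ K L = ((volume K).toReal / (volume L).toReal) ^ ((1 : ℝ) / n) ↔
        ∃ c : ℝ, 0 < c ∧ K = c • L) :=
  Ofun_ge_general n hn K L hK hL φ hφconv hφmono
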